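/- arXiv:1907.08409 — 2 statements merged into one kernel-verified Lean document; each statement's English description precedes it below -/
import Mathlib

section
/- Let a, b ∈ ℝ³ be unit vectors and P := K⁺(a)K⁻(b). Then P commutes with K⁺(a) and with K⁻(b); and for every u ∈ ℝ³ with u·a = 0 and every v ∈ ℝ³ with v·b = 0 one has P K⁺(u) P = −K⁺(u) and P K⁻(v) P = −K⁻(v). Equivalently, for all X, Y ∈ ℝ⁴: ⟨K⁺(u)X, Y⟩ + ⟨K⁺(u)PX, PY⟩ = 0 and ⟨K⁻(v)X, Y⟩ + ⟨K⁻(v)PX, PY⟩ = 0. -/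
/-!
`K⁺` and `K⁻` are two commuting representations of the Clifford algebra of `ℝ³` by skew-symmetric
matrices: `K(x)K(y) + K(y)K(x) = -2(x·y)`. For unit `a`, `b` this makes `P = K⁺(a)K⁻(b)` symmetric
with `P² = 1`, and `P` anticommutes with `K⁺(u)` for `u ⊥ a` (which anticommutes with `K⁺(a)` and
commutes with `K⁻(b)`) and likewise with `K⁻(v)` for `v ⊥ b`; so `PKP = -KP² = -K`. The bilinear
identities are this conjugation identity read through `Pᵀ = P`.
-/

open Matrix

/-- The matrix of `K_{s₁⁺}`: e₁↦e₂, e₂↦−e₁, e₃↦e₄, e₄↦−e₃. -/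
def J1p : Matrix (Fin 4) (Fin 4) ℝ := !![0,-1,0,0; 1,0,0,0; 0,0,0,-1; 0,0,1,0]
/-- The matrix of `K_{s₂⁺}`: e₁↦e₃, e₃↦−e₁, e₄↦e₂, e₂↦−e₄. -/
def J2p : Matrix (Fin 4) (Fin 4) ℝ := !![0,0,-1,0; 0,0,0,1; 1,0,0,0; 0,-1,0,0]
/-- The matrix of `K_{s₃⁺}`: e₁↦e₄, e₄↦−e₁, e₂↦e₃, e₃↦−e₂. -/
def J3p : Matrix (Fin 4) (Fin 4) ℝ := !![0,0,0,-1; 0,0,-1,0; 0,1,0,0; 1,0,0,0]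
/-- The matrix of `K_{s₁⁻}`: e₁↦e₂, e₂↦−e₁, e₃↦−e₄, e₄↦e₃. -/
def J1m : Matrix (Fin 4) (Fin 4) ℝ := !![0,-1,0,0; 1,0,0,0; 0,0,0,1; 0,0,-1,0]
/-- The matrix of `K_{s₂⁻}`: e₁↦e₃, e₃↦−e₁, e₄↦−e₂, e₂↦e₄. -/
def J2m : Matrix (Fin 4) (Fin 4) ℝ := !![0,0,-1,0; 0,0,0,-1; 1,0,0,0; 0,1,0,0]
/-- The matrix of `K_{s₃⁻}`: e₁↦e₄, e₄↦−e₁, e₂↦−e₃, e₃↦e₂. -/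
def J3m : Matrix (Fin 4) (Fin 4) ℝ := !![0,0,0,-1; 0,0,1,0; 0,-1,0,0; 1,0,0,0]

/-- `K⁺(a) = a₁J₁⁺ + a₂J₂⁺ + a₃J₃⁺`. -/
def Kp (a : Fin 3 → ℝ) : Matrix (Fin 4) (Fin 4) ℝ := a 0 • J1p + a 1 • J2p + a 2 • J3p
/-- `K⁻(a) = a₁J₁⁻ + a₂J₂⁻ + a₃J₃⁻`. -/
def Km (a : Fin 3 → ℝ) : Matrix (Fin 4) (Fin 4) ℝ := a 0 • J1m + a 1 • J2m + a 2 • J3m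


section Clifford

variable (x y : Fin 3 → ℝ)

lemma Kp_eq_matrix : Kp x =
    !![0, -x 0, -x 1, -x 2; x 0, 0, -x 2, x 1; x 1, x 2, 0, -x 0; x 2, -x 1, x 0, 0] := by
  ext i j
  fin_cases i <;> fin_cases j <;> simp [Kp, J1p, J2p, J3p]

lemma Km_eq_matrix : Km x =
    !![0, -x 0, -x 1, -x 2; x 0, 0, x 2, -x 1; x 1, -x 2, 0, x 0; x 2, x 1, -x 0, 0] := by
  ext i j
  fin_cases i <;> fin_cases j <;> simp [Km, J1m, J2m, J3m]

lemma Kp_transpose : (Kp x)ᵀ = -Kp x := by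
  rw [Kp_eq_matrix]
  ext i j
  fin_cases i <;> fin_cases j <;> simp

lemma Km_transpose : (Km x)ᵀ = -Km x := by
  rw [Km_eq_matrix]
  ext i j
  fin_cases i <;> fin_cases j <;> simp

lemma Kp_mul_add_mul_Kp : Kp x * Kp y + Kp y * Kp x = (-(2 * (x ⬝ᵥ y))) • 1 := by
  rw [Kp_eq_matrix, Kp_eq_matrix]
  ext i j
  fin_cases i <;> fin_cases j <;> simp [dotProduct, Fin.sum_univ_three] <;> ring

lemma Km_mul_add_mul_Km : Km x * Km y + Km y * Km x = (-(2 * (x ⬝ᵥ y))) • 1 := by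
  rw [Km_eq_matrix, Km_eq_matrix]
  ext i j
  fin_cases i <;> fin_cases j <;> simp [dotProduct, Fin.sum_univ_three] <;> ring

lemma commute_Kp_Km : Commute (Kp x) (Km y) := by
  rw [Commute, SemiconjBy, Kp_eq_matrix, Km_eq_matrix]
  ext i j
  fin_cases i <;> fin_cases j <;> simp <;> ring

lemma Kp_mul_self : Kp x * Kp x = (-(x ⬝ᵥ x)) • 1 := by
  have h := Kp_mul_add_mul_Kp x x
  rw [← two_smul ℝ, show -(2 * (x ⬝ᵥ x)) = 2 * -(x ⬝ᵥ x) by ring, mul_smul] at h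
  exact smul_right_injective _ two_ne_zero h

lemma Km_mul_self : Km x * Km x = (-(x ⬝ᵥ x)) • 1 := by
  have h := Km_mul_add_mul_Km x x
  rw [← two_smul ℝ, show -(2 * (x ⬝ᵥ x)) = 2 * -(x ⬝ᵥ x) by ring, mul_smul] at h
  exact smul_right_injective _ two_ne_zero h

lemma Kp_mul_Kp_of_dotProduct_eq_zero (h : x ⬝ᵥ y = 0) : Kp x * Kp y = -(Kp y * Kp x) := by
  have hxy := Kp_mul_add_mul_Kp x y
  rw [h, mul_zero, neg_zero, zero_smul] at hxy
  exact eq_neg_of_add_eq_zero_left hxy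

lemma Km_mul_Km_of_dotProduct_eq_zero (h : x ⬝ᵥ y = 0) : Km x * Km y = -(Km y * Km x) := by
  have hxy := Km_mul_add_mul_Km x y
  rw [h, mul_zero, neg_zero, zero_smul] at hxy
  exact eq_neg_of_add_eq_zero_left hxy

end Clifford

section Anticommute

variable {R : Type*} [Ring R] {A B P U : R}

lemma mul_mul_eq_neg_of_mul_self_eq_one (hP : P * P = 1) (hPU : P * U = -(U * P)) :
    P * U * P = -U := by
  rw [hPU, neg_mul, mul_assoc, hP, mul_one]

lemma Commute.mul_mul_self_eq_one (hAB : Commute A B) (hA : A * A = -1) (hB : B * B = -1) :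
    A * B * (A * B) = 1 := by
  rw [hAB.symm.mul_mul_mul_comm, hA, hB, neg_one_mul, neg_neg]

lemma mul_mul_eq_neg_of_anticomm_left (hA : A * U = -(U * A)) (hB : Commute B U) :
    A * B * U = -(U * (A * B)) := by
  rw [mul_assoc, hB.eq, ← mul_assoc, hA, neg_mul, mul_assoc]

lemma mul_mul_eq_neg_of_anticomm_right (hA : Commute A U) (hB : B * U = -(U * B)) :
    A * B * U = -(U * (A * B)) := by
  rw [mul_assoc, hB, mul_neg, ← mul_assoc, hA.eq, mul_assoc]

end Anticommute

lemma dotProduct_mulVec_add_eq_zero {n R : Type*} [Fintype n] [CommRing R]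
    {K Q : Matrix n n R} (hQ : Q.IsSymm) (hK : Q * K * Q = -K) (X Y : n → R) :
    (K *ᵥ X) ⬝ᵥ Y + (K *ᵥ (Q *ᵥ X)) ⬝ᵥ (Q *ᵥ Y) = 0 := by
  rw [dotProduct_mulVec, ← mulVec_transpose, hQ.eq, mulVec_mulVec, mulVec_mulVec, hK,
    neg_mulVec, neg_dotProduct, add_neg_cancel]

/-- For unit a, b ∈ ℝ³ and P = K⁺(a)K⁻(b): P commutes with K⁺(a) and K⁻(b); for
u ⊥ a and v ⊥ b one has PK⁺(u)P = −K⁺(u) and PK⁻(v)P = −K⁻(v); equivalently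
⟨K⁺(u)X,Y⟩ + ⟨K⁺(u)PX,PY⟩ = 0 and ⟨K⁻(v)X,Y⟩ + ⟨K⁻(v)PX,PY⟩ = 0 for all X, Y. -/
theorem stmt8 (a b : Fin 3 → ℝ) (ha : a ⬝ᵥ a = 1) (hb : b ⬝ᵥ b = 1) :
    (Kp a * Km b) * Kp a = Kp a * (Kp a * Km b) ∧
    (Kp a * Km b) * Km b = Km b * (Kp a * Km b) ∧
    (∀ u : Fin 3 → ℝ, u ⬝ᵥ a = 0 →
      (Kp a * Km b) * Kp u * (Kp a * Km b) = -Kp u ∧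
      ∀ X Y : Fin 4 → ℝ,
        (Kp u *ᵥ X) ⬝ᵥ Y +
          (Kp u *ᵥ ((Kp a * Km b) *ᵥ X)) ⬝ᵥ ((Kp a * Km b) *ᵥ Y) = 0) ∧
    (∀ v : Fin 3 → ℝ, v ⬝ᵥ b = 0 →
      (Kp a * Km b) * Km v * (Kp a * Km b) = -Km v ∧
      ∀ X Y : Fin 4 → ℝ,
        (Km v *ᵥ X) ⬝ᵥ Y +
          (Km v *ᵥ ((Kp a * Km b) *ᵥ X)) ⬝ᵥ ((Kp a * Km b) *ᵥ Y) = 0) := by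
  have hA : Kp a * Kp a = -1 := by rw [Kp_mul_self, ha, neg_one_smul]
  have hB : Km b * Km b = -1 := by rw [Km_mul_self, hb, neg_one_smul]
  have hAB := commute_Kp_Km a b
  have hP : (Kp a * Km b) * (Kp a * Km b) = 1 := hAB.mul_mul_self_eq_one hA hB
  have hPsymm : (Kp a * Km b).IsSymm := by
    rw [IsSymm, transpose_mul, Km_transpose, Kp_transpose, neg_mul_neg, hAB.eq]
  refine ⟨((Commute.refl _).mul_right hAB).eq.symm, (hAB.mul_left (Commute.refl _)).eq, ?_, ?_⟩
  · intro u hu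
    have hPU := mul_mul_eq_neg_of_mul_self_eq_one hP <| mul_mul_eq_neg_of_anticomm_left
      (Kp_mul_Kp_of_dotProduct_eq_zero a u (by rwa [dotProduct_comm])) (commute_Kp_Km u b).symm
    exact ⟨hPU, dotProduct_mulVec_add_eq_zero hPsymm hPU⟩
  · intro v hv
    have hPV := mul_mul_eq_neg_of_mul_self_eq_one hP <| mul_mul_eq_neg_of_anticomm_right
      (commute_Kp_Km a v) (Km_mul_Km_of_dotProduct_eq_zero b v (by rwa [dotProduct_comm]))
    exact ⟨hPV, dotProduct_mulVec_add_eq_zero hPsymm hPV⟩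
end

section
/- Let ℛ be a self-adjoint linear endomorphism of ℝ³×ℝ³ (with the standard inner product). Then the following are equivalent: (i) for all unit vectors a, b ∈ ℝ³, every w ∈ ℝ³ with w·a = 0, every v ∈ ℝ³ with v·b = 0, and all X, Y ∈ ℝ⁴, one has ⟨ℛ(w,0), ω(X,Y) + ω(PX,PY)⟩ = 0 and ⟨ℛ(0,v), ω(X,Y) + ω(PX,PY)⟩ = 0, where P := K⁺(a)K⁻(b); (ii) there exist λ, μ ∈ ℝ such that ℛ(w,v) = (λw, μv) for all (w,v) ∈ ℝ³×ℝ³ (i.e., both diagonal blocks of ℛ are scalar and the mixed block vanishes). -/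
/-!
For unit `a, b` the endomorphism `P = K⁺(a) K⁻(b)` of `ℝ⁴` acts on 2-vectors as the rotation by `π`
about `a` on `Λ²₊` and about `b` on `Λ²₋`: `K⁺` and `K⁻` commute, `K⁻(b)` is orthogonal, and
`K⁺(a)ᵀ K⁺(c) K⁺(a) = K⁺(2 (a·c) a - c)` (quaternion conjugation), and symmetrically. Hence
`ω(X,Y) + ω(PX,PY)` is twice the pair of orthogonal projections of `ω(X,Y)` onto `ℝa` and `ℝb`, and
since `ω(e₁, ·)` reaches every pair `(u/2, u/2)`, condition (i) says that
`(ℛ(w,0)₁·a) a + (ℛ(w,0)₂·b) b = 0` for all unit `a, b` and `w ⊥ a`, and likewise for `ℛ(0,v)`.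
Letting `b` vary kills the off-diagonal blocks, and what remains says that each diagonal block
maps `a^⊥` into `a^⊥` for every `a`, so it maps every vector to a multiple of itself and is scalar.
-/

open Matrix

/-- The coordinate vector of the 2-vector X∧Y in the basis (s₁⁺,s₂⁺,s₃⁺,s₁⁻,s₂⁻,s₃⁻):
ω(X,Y) = ((½⟨JᵢX,Y⟩)ᵢ for the self-dual part, (½⟨JᵢX,Y⟩)ᵢ for the anti-self-dual part). -/
noncomputable def omega (X Y : Fin 4 → ℝ) : (Fin 3 → ℝ) × (Fin 3 → ℝ) :=
  (![(1/2) * ((J1p *ᵥ X) ⬝ᵥ Y), (1/2) * ((J2p *ᵥ X) ⬝ᵥ Y), (1/2) * ((J3p *ᵥ X) ⬝ᵥ Y)],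
   ![(1/2) * ((J1m *ᵥ X) ⬝ᵥ Y), (1/2) * ((J2m *ᵥ X) ⬝ᵥ Y), (1/2) * ((J3m *ᵥ X) ⬝ᵥ Y)])

/-- The standard inner product on ℝ³ × ℝ³. -/
def ip (x y : (Fin 3 → ℝ) × (Fin 3 → ℝ)) : ℝ := x.1 ⬝ᵥ y.1 + x.2 ⬝ᵥ y.2

section DotProduct

variable {n : Type*} [Fintype n]

theorem dotProduct_self_pos {v : n → ℝ} (hv : v ≠ 0) : 0 < v ⬝ᵥ v :=
  (Fintype.sum_nonneg fun i ↦ mul_self_nonneg (v i)).lt_of_ne' (mt dotProduct_self_eq_zero.mp hv)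

theorem dotProduct_self_smul_eq_of_forall_dotProduct_eq_zero {v u : n → ℝ}
    (h : ∀ a, v ⬝ᵥ a = 0 → u ⬝ᵥ a = 0) : (v ⬝ᵥ v) • u = (v ⬝ᵥ u) • v := by
  set a := (v ⬝ᵥ v) • u - (v ⬝ᵥ u) • v
  have hva : v ⬝ᵥ a = 0 := by
    simp only [a, dotProduct_sub, dotProduct_smul, smul_eq_mul]; ring
  have hua : u ⬝ᵥ a = 0 := h a hva
  have haa : a ⬝ᵥ a = 0 := by
    calc a ⬝ᵥ a = (v ⬝ᵥ v) * (u ⬝ᵥ a) - (v ⬝ᵥ u) * (v ⬝ᵥ a) := by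
          simp only [a, sub_dotProduct, smul_dotProduct, smul_eq_mul]
      _ = 0 := by rw [hua, hva]; ring
  exact sub_eq_zero.mp (dotProduct_self_eq_zero.mp haa)

theorem forall_dotProduct_eq_zero_of_forall_unit {w u : n → ℝ}
    (h : ∀ a, a ⬝ᵥ a = 1 → w ⬝ᵥ a = 0 → u ⬝ᵥ a = 0) (a : n → ℝ) (hwa : w ⬝ᵥ a = 0) :
    u ⬝ᵥ a = 0 := by
  rcases eq_or_ne a 0 with rfl | ha
  · exact dotProduct_zero u
  have hpos : 0 < a ⬝ᵥ a := dotProduct_self_pos ha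
  set c := (Real.sqrt (a ⬝ᵥ a))⁻¹
  have hc : c ≠ 0 := inv_ne_zero (Real.sqrt_pos.mpr hpos).ne'
  have hunit : (c • a) ⬝ᵥ (c • a) = 1 := by
    rw [smul_dotProduct, dotProduct_smul, smul_eq_mul, smul_eq_mul, ← mul_assoc, ← mul_inv,
      Real.mul_self_sqrt hpos.le, inv_mul_cancel₀ hpos.ne']
  have := h (c • a) hunit (by rw [dotProduct_smul, hwa, smul_zero])
  rwa [dotProduct_smul, smul_eq_mul, mul_eq_zero, or_iff_right hc] at this

theorem LinearMap.exists_eq_smul_of_forall_dotProduct_eq_zero (f : (n → ℝ) →ₗ[ℝ] (n → ℝ))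
    (h : ∀ a w, a ⬝ᵥ a = 1 → w ⬝ᵥ a = 0 → f w ⬝ᵥ a = 0) : ∃ c : ℝ, ∀ w, f w = c • w := by
  obtain ⟨c, hc⟩ := f.exists_eq_smul_id_of_forall_notLinearIndependent fun v ↦ by
    rcases eq_or_ne v 0 with rfl | hv
    · simp [linearIndependent_fin2]
    rw [LinearIndependent.pair_iff' hv]
    push Not
    have hpos : 0 < v ⬝ᵥ v := dotProduct_self_pos hv
    refine ⟨(v ⬝ᵥ f v) / (v ⬝ᵥ v), ?_⟩
    rw [div_eq_inv_mul, mul_smul, ← dotProduct_self_smul_eq_of_forall_dotProduct_eq_zero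
      (forall_dotProduct_eq_zero_of_forall_unit fun a ha hva ↦ h a v ha hva),
      inv_smul_smul₀ hpos.ne']
  exact ⟨c, fun w ↦ by simp [hc]⟩

variable [DecidableEq n]

theorem LinearMap.eq_zero_of_forall_dotProduct_eq_zero [Nontrivial n] {M : Type*}
    [AddCommMonoid M] [Module ℝ M] (g : (n → ℝ) →ₗ[ℝ] M)
    (h : ∀ a w, a ⬝ᵥ a = 1 → w ⬝ᵥ a = 0 → g w = 0) : g = 0 := by
  refine LinearMap.pi_ext fun i x ↦ ?_
  obtain ⟨j, hji⟩ := exists_ne i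
  exact h (Pi.single j 1) (Pi.single i x) (by simp) (by simp [hji])

theorem dotProduct_eq_zero_and_eq_zero_of_forall_smul_add_smul_eq_zero [Nontrivial n]
    {a F G : n → ℝ} (ha : a ≠ 0) (h : ∀ b, b ⬝ᵥ b = 1 → (F ⬝ᵥ a) • a + (G ⬝ᵥ b) • b = 0) :
    F ⬝ᵥ a = 0 ∧ G = 0 := by
  have hsingle : ∀ i, G i • Pi.single i (1 : ℝ) = -((F ⬝ᵥ a) • a) := fun i ↦ by
    have := h (Pi.single i 1) (by simp)
    rwa [dotProduct_single, mul_one, add_comm, add_eq_zero_iff_eq_neg] at this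
  have hG : G = 0 := funext fun i ↦ by
    obtain ⟨j, hji⟩ := exists_ne i
    simpa [hji.symm] using congrFun ((hsingle i).trans (hsingle j).symm) i
  have := h (Pi.single (Classical.arbitrary n) 1) (by simp)
  rw [hG, zero_dotProduct, zero_smul, add_zero, smul_eq_zero] at this
  exact ⟨this.resolve_right ha, hG⟩

end DotProduct

theorem commute_Kp_Km_s12 (a b : Fin 3 → ℝ) : Commute (Kp a) (Km b) := by
  ext i j
  fin_cases i <;> fin_cases j <;>
    simp [Kp, Km, J1p, J2p, J3p, J1m, J2m, J3m, Matrix.mul_apply, Fin.sum_univ_succ] <;> ring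

theorem transpose_Kp_mul_Kp (a : Fin 3 → ℝ) : (Kp a)ᵀ * Kp a = (a ⬝ᵥ a) • 1 := by
  ext i j
  fin_cases i <;> fin_cases j <;>
    simp [Kp, J1p, J2p, J3p, Matrix.mul_apply, Fin.sum_univ_succ, dotProduct] <;> ring

theorem transpose_Km_mul_Km (b : Fin 3 → ℝ) : (Km b)ᵀ * Km b = (b ⬝ᵥ b) • 1 := by
  ext i j
  fin_cases i <;> fin_cases j <;>
    simp [Km, J1m, J2m, J3m, Matrix.mul_apply, Fin.sum_univ_succ, dotProduct] <;> ring

theorem transpose_Kp_mul_Kp_mul_Kp (a c : Fin 3 → ℝ) :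
    (Kp a)ᵀ * Kp c * Kp a = Kp ((2 * (a ⬝ᵥ c)) • a - (a ⬝ᵥ a) • c) := by
  ext i j
  fin_cases i <;> fin_cases j <;>
    simp [Kp, J1p, J2p, J3p, Matrix.mul_apply, Fin.sum_univ_succ, dotProduct] <;> ring

theorem transpose_Km_mul_Km_mul_Km (b c : Fin 3 → ℝ) :
    (Km b)ᵀ * Km c * Km b = Km ((2 * (b ⬝ᵥ c)) • b - (b ⬝ᵥ b) • c) := by
  ext i j
  fin_cases i <;> fin_cases j <;>
    simp [Km, J1m, J2m, J3m, Matrix.mul_apply, Fin.sum_univ_succ, dotProduct] <;> ring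

theorem transpose_mul_Kp_mul (a b c : Fin 3 → ℝ) :
    (Kp a * Km b)ᵀ * Kp c * (Kp a * Km b) =
      (b ⬝ᵥ b) • Kp ((2 * (a ⬝ᵥ c)) • a - (a ⬝ᵥ a) • c) := by
  calc (Kp a * Km b)ᵀ * Kp c * (Kp a * Km b)
      = (Km b)ᵀ * (Kp ((2 * (a ⬝ᵥ c)) • a - (a ⬝ᵥ a) • c) * Km b) := by
        rw [← transpose_Kp_mul_Kp_mul_Kp]; simp only [transpose_mul, Matrix.mul_assoc]
    _ = (b ⬝ᵥ b) • Kp ((2 * (a ⬝ᵥ c)) • a - (a ⬝ᵥ a) • c) := by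
        rw [(commute_Kp_Km_s12 _ _).eq, ← Matrix.mul_assoc, transpose_Km_mul_Km, smul_mul_assoc,
          one_mul]

theorem transpose_mul_Km_mul (a b c : Fin 3 → ℝ) :
    (Kp a * Km b)ᵀ * Km c * (Kp a * Km b) =
      (a ⬝ᵥ a) • Km ((2 * (b ⬝ᵥ c)) • b - (b ⬝ᵥ b) • c) := by
  calc (Kp a * Km b)ᵀ * Km c * (Kp a * Km b)
      = (Kp a)ᵀ * (Km ((2 * (b ⬝ᵥ c)) • b - (b ⬝ᵥ b) • c) * Kp a) := by
        rw [← transpose_Km_mul_Km_mul_Km, (commute_Kp_Km_s12 a b).eq]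
        simp only [transpose_mul, Matrix.mul_assoc]
    _ = (a ⬝ᵥ a) • Km ((2 * (b ⬝ᵥ c)) • b - (b ⬝ᵥ b) • c) := by
        rw [← (commute_Kp_Km_s12 _ _).eq, ← Matrix.mul_assoc, transpose_Kp_mul_Kp, smul_mul_assoc,
          one_mul]

theorem mulVec_dotProduct_mulVec {R m n p : Type*} [CommSemiring R] [Fintype m] [Fintype n]
    [Fintype p] (A : Matrix m n R) (B : Matrix m p R) (X : n → R) (Y : p → R) :
    (A *ᵥ X) ⬝ᵥ (B *ᵥ Y) = ((Bᵀ * A) *ᵥ X) ⬝ᵥ Y := by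
  rw [dotProduct_mulVec, ← mulVec_transpose, mulVec_mulVec]

theorem dotProduct_omega_fst (c : Fin 3 → ℝ) (X Y : Fin 4 → ℝ) :
    c ⬝ᵥ (omega X Y).1 = (Kp c *ᵥ X) ⬝ᵥ Y / 2 := by
  simp only [omega, Kp, add_mulVec, smul_mulVec, add_dotProduct, smul_dotProduct, smul_eq_mul]
  simp [dotProduct, Fin.sum_univ_three]
  ring

theorem dotProduct_omega_snd (c : Fin 3 → ℝ) (X Y : Fin 4 → ℝ) :
    c ⬝ᵥ (omega X Y).2 = (Km c *ᵥ X) ⬝ᵥ Y / 2 := by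
  simp only [omega, Km, add_mulVec, smul_mulVec, add_dotProduct, smul_dotProduct, smul_eq_mul]
  simp [dotProduct, Fin.sum_univ_three]
  ring

theorem omega_mulVec_fst (a b : Fin 3 → ℝ) (X Y : Fin 4 → ℝ) :
    (omega ((Kp a * Km b) *ᵥ X) ((Kp a * Km b) *ᵥ Y)).1 =
      (b ⬝ᵥ b) • ((2 * (a ⬝ᵥ (omega X Y).1)) • a - (a ⬝ᵥ a) • (omega X Y).1) := by
  refine dotProduct_eq _ _ fun c ↦ ?_
  rw [dotProduct_comm, dotProduct_omega_fst, mulVec_mulVec, mulVec_dotProduct_mulVec,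
    ← Matrix.mul_assoc, transpose_mul_Kp_mul, smul_mulVec, smul_dotProduct, smul_eq_mul,
    mul_div_assoc, ← dotProduct_omega_fst]
  simp only [smul_dotProduct, sub_dotProduct, smul_eq_mul, dotProduct_comm a c,
    dotProduct_comm (omega X Y).1 c]
  ring

theorem omega_mulVec_snd (a b : Fin 3 → ℝ) (X Y : Fin 4 → ℝ) :
    (omega ((Kp a * Km b) *ᵥ X) ((Kp a * Km b) *ᵥ Y)).2 =
      (a ⬝ᵥ a) • ((2 * (b ⬝ᵥ (omega X Y).2)) • b - (b ⬝ᵥ b) • (omega X Y).2) := by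
  refine dotProduct_eq _ _ fun c ↦ ?_
  rw [dotProduct_comm, dotProduct_omega_snd, mulVec_mulVec, mulVec_dotProduct_mulVec,
    ← Matrix.mul_assoc, transpose_mul_Km_mul, smul_mulVec, smul_dotProduct, smul_eq_mul,
    mul_div_assoc, ← dotProduct_omega_snd]
  simp only [smul_dotProduct, sub_dotProduct, smul_eq_mul, dotProduct_comm b c,
    dotProduct_comm (omega X Y).2 c]
  ring

theorem omega_add_omega_mulVec {a b : Fin 3 → ℝ} (ha : a ⬝ᵥ a = 1) (hb : b ⬝ᵥ b = 1)
    (X Y : Fin 4 → ℝ) :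
    omega X Y + omega ((Kp a * Km b) *ᵥ X) ((Kp a * Km b) *ᵥ Y) =
      ((2 * (a ⬝ᵥ (omega X Y).1)) • a, (2 * (b ⬝ᵥ (omega X Y).2)) • b) := by
  ext1
  · rw [Prod.fst_add, omega_mulVec_fst, ha, hb, one_smul, one_smul, add_sub_cancel]
  · rw [Prod.snd_add, omega_mulVec_snd, ha, hb, one_smul, one_smul, add_sub_cancel]

theorem omega_vecCons (u : Fin 3 → ℝ) :
    omega ![1, 0, 0, 0] (vecCons 0 u) = ((1 / 2 : ℝ) • u, (1 / 2 : ℝ) • u) := by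
  ext i <;> fin_cases i <;>
    simp [omega, J1p, J2p, J3p, J1m, J2m, J3m, Matrix.mulVec, dotProduct, Fin.sum_univ_succ]

theorem smul_add_smul_eq_zero_of_forall_ip_omega {a b : Fin 3 → ℝ} (ha : a ⬝ᵥ a = 1)
    (hb : b ⬝ᵥ b = 1) {z : (Fin 3 → ℝ) × (Fin 3 → ℝ)}
    (h : ∀ X Y : Fin 4 → ℝ,
      ip z (omega X Y + omega ((Kp a * Km b) *ᵥ X) ((Kp a * Km b) *ᵥ Y)) = 0) :
    (z.1 ⬝ᵥ a) • a + (z.2 ⬝ᵥ b) • b = 0 := by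
  have hx : ∀ u, ((z.1 ⬝ᵥ a) • a + (z.2 ⬝ᵥ b) • b) ⬝ᵥ u = 0 := fun u ↦ by
    have := h ![1, 0, 0, 0] (vecCons 0 u)
    rw [omega_add_omega_mulVec ha hb, omega_vecCons] at this
    simp only [ip, dotProduct_smul, smul_eq_mul] at this
    simp only [add_dotProduct, smul_dotProduct, smul_eq_mul]
    linear_combination this
  exact dotProduct_eq_zero _ hx

theorem LinearMap.prod_apply_eq_of_blocks {M N : Type*} [AddCommGroup M] [Module ℝ M]
    [AddCommGroup N] [Module ℝ N] (R : M × N →ₗ[ℝ] M × N) {lam mu : ℝ}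
    (h11 : ∀ w, (R (w, 0)).1 = lam • w) (h22 : ∀ v, (R (0, v)).2 = mu • v)
    (h21 : ∀ w, (R (w, 0)).2 = 0) (h12 : ∀ v, (R (0, v)).1 = 0) (w : M) (v : N) :
    R (w, v) = (lam • w, mu • v) := by
  rw [← add_zero w, ← zero_add v, ← Prod.mk_add_mk, map_add, zero_add, add_zero]
  ext1
  · rw [Prod.fst_add, h11, h12, add_zero]
  · rw [Prod.snd_add, h22, h21, zero_add]

theorem stmt12_general (R : ((Fin 3 → ℝ) × (Fin 3 → ℝ)) →ₗ[ℝ] ((Fin 3 → ℝ) × (Fin 3 → ℝ))) :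
    (∀ a b : Fin 3 → ℝ, a ⬝ᵥ a = 1 → b ⬝ᵥ b = 1 →
      ∀ w : Fin 3 → ℝ, w ⬝ᵥ a = 0 → ∀ v : Fin 3 → ℝ, v ⬝ᵥ b = 0 →
        ∀ X Y : Fin 4 → ℝ,
          ip (R (w, 0))
              (omega X Y + omega ((Kp a * Km b) *ᵥ X) ((Kp a * Km b) *ᵥ Y)) = 0 ∧
          ip (R (0, v))
              (omega X Y + omega ((Kp a * Km b) *ᵥ X) ((Kp a * Km b) *ᵥ Y)) = 0) ↔
    (∃ lam mu : ℝ, ∀ w v : Fin 3 → ℝ, R (w, v) = (lam • w, mu • v)) := by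
  constructor
  · intro h
    have hw : ∀ a w, a ⬝ᵥ a = 1 → w ⬝ᵥ a = 0 → (R (w, 0)).1 ⬝ᵥ a = 0 ∧ (R (w, 0)).2 = 0 :=
      fun a w ha hwa ↦ dotProduct_eq_zero_and_eq_zero_of_forall_smul_add_smul_eq_zero
        (by rintro rfl; simp at ha) fun b hb ↦ smul_add_smul_eq_zero_of_forall_ip_omega ha hb
          fun X Y ↦ (h a b ha hb w hwa 0 (zero_dotProduct b) X Y).1
    have hv : ∀ b v, b ⬝ᵥ b = 1 → v ⬝ᵥ b = 0 → (R (0, v)).2 ⬝ᵥ b = 0 ∧ (R (0, v)).1 = 0 :=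
      fun b v hb hvb ↦ dotProduct_eq_zero_and_eq_zero_of_forall_smul_add_smul_eq_zero
        (by rintro rfl; simp at hb) fun a ha ↦ (add_comm _ _).trans <|
          smul_add_smul_eq_zero_of_forall_ip_omega ha hb
            fun X Y ↦ (h a b ha hb 0 (zero_dotProduct a) v hvb X Y).2
    obtain ⟨lam, h11⟩ := (LinearMap.fst ℝ _ _ ∘ₗ R ∘ₗ LinearMap.inl ℝ _ _)
      |>.exists_eq_smul_of_forall_dotProduct_eq_zero fun a w ha hwa ↦ (hw a w ha hwa).1
    obtain ⟨mu, h22⟩ := (LinearMap.snd ℝ _ _ ∘ₗ R ∘ₗ LinearMap.inr ℝ _ _)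
      |>.exists_eq_smul_of_forall_dotProduct_eq_zero fun b v hb hvb ↦ (hv b v hb hvb).1
    have h21 := (LinearMap.snd ℝ _ _ ∘ₗ R ∘ₗ LinearMap.inl ℝ _ _)
      |>.eq_zero_of_forall_dotProduct_eq_zero fun a w ha hwa ↦ (hw a w ha hwa).2
    have h12 := (LinearMap.fst ℝ _ _ ∘ₗ R ∘ₗ LinearMap.inr ℝ _ _)
      |>.eq_zero_of_forall_dotProduct_eq_zero fun b v hb hvb ↦ (hv b v hb hvb).2
    exact ⟨lam, mu, R.prod_apply_eq_of_blocks h11 h22 (LinearMap.congr_fun h21)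
      (LinearMap.congr_fun h12)⟩
  · rintro ⟨lam, mu, hR⟩ a b ha hb w hwa v hvb X Y
    simp [omega_add_omega_mulVec ha hb, hR, ip, hwa, hvb]

/-- For a self-adjoint ℛ on ℝ³×ℝ³, the pointwise form of identity (eq D3-2) of the
paper (property F, i.e. integrability, of 𝒟₃) holds exactly when both diagonal
blocks of ℛ are scalar and the mixed block vanishes. -/
theorem stmt12 (R : ((Fin 3 → ℝ) × (Fin 3 → ℝ)) →ₗ[ℝ] ((Fin 3 → ℝ) × (Fin 3 → ℝ)))
    (hR : ∀ x y, ip (R x) y = ip x (R y)) :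
    (∀ a b : Fin 3 → ℝ, a ⬝ᵥ a = 1 → b ⬝ᵥ b = 1 →
      ∀ w : Fin 3 → ℝ, w ⬝ᵥ a = 0 → ∀ v : Fin 3 → ℝ, v ⬝ᵥ b = 0 →
        ∀ X Y : Fin 4 → ℝ,
          ip (R (w, 0))
              (omega X Y + omega ((Kp a * Km b) *ᵥ X) ((Kp a * Km b) *ᵥ Y)) = 0 ∧
          ip (R (0, v))
              (omega X Y + omega ((Kp a * Km b) *ᵥ X) ((Kp a * Km b) *ᵥ Y)) = 0) ↔
    (∃ lam mu : ℝ, ∀ w v : Fin 3 → ℝ, R (w, v) = (lam • w, mu • v)) :=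
  stmt12_general R
end
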